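/- arXiv:2412.01815 — 6 statements merged into one kernel-verified Lean document; each statement's English description precedes it below -/
import Mathlib

section
/- Let α > −1/4 and β = √(1+4α). The function θ₀(R) = R^{(1−β)/2}(1−6R^{2β}+R^{4β})/(β²(1+R^{2β})^{3/2}) satisfies 𝓛θ₀ = 0 on (0,∞), i.e. for all R > 0, −θ₀''(R) + (α/R²)·θ₀(R) − 5·W_α(R)^4·θ₀(R) = 0. -/
noncomputable def betaOf (α : ℝ) : ℝ := Real.sqrt (1 + 4 * α)

noncomputable def Walpha (α : ℝ) (R : ℝ) : ℝ :=
  (3 * betaOf α ^ 2) ^ ((1 : ℝ) / 4) *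
    (R ^ (betaOf α - 1) / (1 + R ^ (2 * betaOf α))) ^ ((1 : ℝ) / 2)

noncomputable def theta0 (α : ℝ) (R : ℝ) : ℝ :=
  R ^ ((1 - betaOf α) / 2) * (1 - 6 * R ^ (2 * betaOf α) + R ^ (4 * betaOf α)) /
    (betaOf α ^ 2 * (1 + R ^ (2 * betaOf α)) ^ ((3 : ℝ) / 2))

/-! With `u = R^(2β)` and `a = (1-β)/2`, `θ₀ = β⁻² (R^a - 6 R^a u + R^a u²) (1+u)^(-3/2)`, a combination
of functions `R^c (1+R^b)^e`. This family is closed under differentiation up to shifts of `c` and `e`,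
so `𝓛θ₀` is an explicit combination of such functions; clearing the powers of `R` and `1+u` leaves a
polynomial identity in `u` and `β`, which holds once `α = (β²-1)/4`. -/

open Filter Set Topology

theorem deriv_deriv_eq_of_hasDerivAt {f f' : ℝ → ℝ} {f'' x : ℝ}
    (hf : ∀ᶠ y in 𝓝 x, HasDerivAt f (f' y) y) (hf' : HasDerivAt f' f'' x) :
    deriv (deriv f) x = f'' :=
  (EventuallyEq.deriv_eq (hf.mono fun _ hy => hy.deriv)).trans hf'.deriv

noncomputable def powOnePlusPow (b c e R : ℝ) : ℝ := R ^ c * (1 + R ^ b) ^ e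

noncomputable def powOnePlusPowDeriv (b c e R : ℝ) : ℝ :=
  c * powOnePlusPow b (c - 1) e R + e * b * powOnePlusPow b (c + b - 1) (e - 1) R

noncomputable def powOnePlusPowDeriv2 (b c e R : ℝ) : ℝ :=
  c * (c - 1) * powOnePlusPow b (c - 2) e R
    + e * b * (2 * c + b - 1) * powOnePlusPow b (c + b - 2) (e - 1) R
    + e * (e - 1) * b ^ 2 * powOnePlusPow b (c + 2 * b - 2) (e - 2) R

section

variable {b R : ℝ}

theorem hasDerivAt_powOnePlusPow (c e : ℝ) (hR : 0 < R) :
    HasDerivAt (powOnePlusPow b c e) (powOnePlusPowDeriv b c e R) R := by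
  have hpow : HasDerivAt (fun x : ℝ => 1 + x ^ b) (b * R ^ (b - 1)) R :=
    (Real.hasDerivAt_rpow_const (Or.inl hR.ne')).const_add 1
  refine ((Real.hasDerivAt_rpow_const (p := c) (Or.inl hR.ne')).mul
    (hpow.rpow_const (p := e) (Or.inl (by positivity)))).congr_deriv ?_
  rw [powOnePlusPowDeriv, powOnePlusPow, powOnePlusPow,
    show c + b - 1 = c + (b - 1) by ring, Real.rpow_add hR]
  ring

theorem hasDerivAt_powOnePlusPowDeriv (c e : ℝ) (hR : 0 < R) :
    HasDerivAt (powOnePlusPowDeriv b c e) (powOnePlusPowDeriv2 b c e R) R := by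
  refine (((hasDerivAt_powOnePlusPow (c - 1) e hR).const_mul c).add
    ((hasDerivAt_powOnePlusPow (c + b - 1) (e - 1) hR).const_mul (e * b))).congr_deriv ?_
  simp only [powOnePlusPowDeriv, powOnePlusPowDeriv2]
  rw [show c - 1 - 1 = c - 2 by ring, show c - 1 + b - 1 = c + b - 2 by ring,
    show c + b - 1 - 1 = c + b - 2 by ring, show c + b - 1 + b - 1 = c + 2 * b - 2 by ring,
    show e - 1 - 1 = e - 2 by ring]
  ring

end

noncomputable def theta0Combination (β : ℝ) (f : ℝ → ℝ → ℝ) (R : ℝ) : ℝ :=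
  (f ((1 - β) / 2) R - 6 * f ((1 - β) / 2 + 2 * β) R + f ((1 - β) / 2 + 4 * β) R) / β ^ 2

theorem hasDerivAt_theta0Combination {β R : ℝ} {f g : ℝ → ℝ → ℝ}
    (hf : ∀ c, HasDerivAt (f c) (g c R) R) :
    HasDerivAt (theta0Combination β f) (theta0Combination β g R) R :=
  (((hf _).sub ((hf _).const_mul 6)).add (hf _)).div_const _

theorem theta0_eq_theta0Combination {α R : ℝ} (hR : 0 < R) :
    theta0 α R =
      theta0Combination (betaOf α) (fun c => powOnePlusPow (2 * betaOf α) c (-3 / 2)) R := by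
  simp only [theta0, theta0Combination, powOnePlusPow]
  generalize betaOf α = β
  have hu : (0 : ℝ) < 1 + R ^ (2 * β) := by positivity
  rw [show (-3 / 2 : ℝ) = -(3 / 2) by norm_num, Real.rpow_neg hu.le]
  simp only [Real.rpow_add hR]
  field_simp

theorem deriv_deriv_theta0 {α R : ℝ} (hR : 0 < R) :
    deriv (deriv (theta0 α)) R =
      theta0Combination (betaOf α) (fun c => powOnePlusPowDeriv2 (2 * betaOf α) c (-3 / 2)) R := by
  refine deriv_deriv_eq_of_hasDerivAt (f' := theta0Combination (betaOf α)
    (fun c => powOnePlusPowDeriv (2 * betaOf α) c (-3 / 2))) ?_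
    (hasDerivAt_theta0Combination fun c => hasDerivAt_powOnePlusPowDeriv c _ hR)
  filter_upwards [Ioi_mem_nhds hR] with S hS
  refine (hasDerivAt_theta0Combination fun c => hasDerivAt_powOnePlusPow c _ hS
    ).congr_of_eventuallyEq ?_
  filter_upwards [Ioi_mem_nhds hS] with T hT
  exact theta0_eq_theta0Combination hT

theorem Walpha_pow_four {α R : ℝ} (hR : 0 < R) :
    Walpha α R ^ 4 =
      3 * betaOf α ^ 2 * R ^ (2 * betaOf α) / (R ^ 2 * (1 + R ^ (2 * betaOf α)) ^ 2) := by
  set β := betaOf α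
  have hβ : (0 : ℝ) ≤ 3 * β ^ 2 := by positivity
  have hq : (0 : ℝ) ≤ R ^ (β - 1) / (1 + R ^ (2 * β)) := by positivity
  have hsq : (R ^ (β - 1)) ^ 2 = R ^ (2 * β) / R ^ 2 := by
    rw [← Real.rpow_natCast, ← Real.rpow_mul hR.le,
      show (β - 1) * (2 : ℕ) = 2 * β - 2 by push_cast; ring, Real.rpow_sub hR, Real.rpow_two]
  rw [Walpha, mul_pow, ← Real.rpow_natCast, ← Real.rpow_mul hβ, ← Real.rpow_natCast (_ ^ _),
    ← Real.rpow_mul hq]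
  norm_num
  rw [div_pow, hsq]
  field_simp

theorem linearized_theta0Combination_eq_zero {α β R : ℝ} (hβ : β ≠ 0) (hαβ : β ^ 2 = 1 + 4 * α)
    (hR : 0 < R) :
    -theta0Combination β (fun c => powOnePlusPowDeriv2 (2 * β) c (-3 / 2)) R
      + (α / R ^ 2) * theta0Combination β (fun c => powOnePlusPow (2 * β) c (-3 / 2)) R
      - 5 * (3 * β ^ 2 * R ^ (2 * β) / (R ^ 2 * (1 + R ^ (2 * β)) ^ 2))
        * theta0Combination β (fun c => powOnePlusPow (2 * β) c (-3 / 2)) R = 0 := by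
  obtain rfl : α = (β ^ 2 - 1) / 4 := by linarith
  have hu : (0 : ℝ) < 1 + R ^ (2 * β) := by positivity
  have h4 : R ^ (4 * β) = (R ^ (2 * β)) ^ 2 := by
    rw [← Real.rpow_mul_natCast hR.le]; ring_nf
  have h22 : R ^ (2 * (2 * β)) = (R ^ (2 * β)) ^ 2 := by rw [← h4]; ring_nf
  simp only [theta0Combination, powOnePlusPowDeriv2, powOnePlusPow, Real.rpow_sub hR,
    Real.rpow_add hR, Real.rpow_sub hu, Real.rpow_one, Real.rpow_two, h4, h22]
  generalize R ^ (2 * β) = u at hu ⊢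
  field_simp
  ring

/-- `θ₀` lies in the kernel of the linearized operator `𝓛 = -∂_R² + α/R² - 5W_α⁴`. -/
theorem theta0_solves_linearized (α : ℝ) (hα : -(1 / 4 : ℝ) < α) :
    ∀ R : ℝ, 0 < R →
      -(deriv (deriv (theta0 α)) R) + (α / R ^ 2) * theta0 α R
        - 5 * (Walpha α R) ^ 4 * theta0 α R = 0 := by
  intro R hR
  have hβ : 0 < betaOf α := Real.sqrt_pos.2 (by linarith)
  have hαβ : betaOf α ^ 2 = 1 + 4 * α := Real.sq_sqrt (by linarith)
  rw [deriv_deriv_theta0 hR, theta0_eq_theta0Combination hR, Walpha_pow_four hR]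
  exact linearized_theta0Combination_eq_zero hβ.ne' hαβ hR
end

section
/- Let α > −1/4, β = √(1+4α), ν > 0. Set λ(t) = t^{−1−ν} and τ(t) = ν^{−1}·t^{−ν} for t > 0, and let Λ(τ) = (ντ)^{1+1/ν}, so that Λ(τ(t)) = λ(t). Let w : (0,∞)×(0,∞) → ℝ be twice continuously differentiable, and define ε(t,r) = (λ(t)·r)^{−1}·w(τ(t), λ(t)·r). Then for all t, r > 0, with R = λ(t)·r: ∂_t²ε − ∂_r²ε − (2/r)·∂_rε + (α/r²)·ε − 5·λ(t)²·W_α(R)⁴·ε = λ(t)²·R^{−1}·( 𝒟²w + (Λ'/Λ)·𝒟w + 𝓛w )(τ(t), R), where (𝒟w)(τ,R) = ∂_τw(τ,R) + (Λ'(τ)/Λ(τ))·( R·∂_Rw(τ,R) − w(τ,R) ) and (𝓛w)(τ,R) = −∂_R²w(τ,R) + (α/R²)·w(τ,R) − 5·W_α(R)⁴·w(τ,R). -/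
/-- `λ(t) = t^{-1-ν}`. -/
noncomputable def lamT (ν t : ℝ) : ℝ := t ^ (-(1 + ν))

/-- `τ(t) = ν⁻¹ t^{-ν}`. -/
noncomputable def tauT (ν t : ℝ) : ℝ := ν⁻¹ * t ^ (-ν)

/-- `Λ(τ) = (ντ)^{1+1/ν}`, so that `Λ(τ(t)) = λ(t)`. -/
noncomputable def LamF (ν τ : ℝ) : ℝ := (ν * τ) ^ (1 + 1 / ν)

/-- The dilated derivative `(𝒟w)(τ,R) = ∂_τ w + (Λ'/Λ)(R ∂_R w - w)`. -/
noncomputable def Dop (ν : ℝ) (w : ℝ → ℝ → ℝ) : ℝ → ℝ → ℝ := fun τ R =>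
  deriv (fun σ => w σ R) τ
    + (deriv (LamF ν) τ / LamF ν τ) * (R * deriv (w τ) R - w τ R)

/-- The linearized operator in the `R` variable:
`(𝓛w)(τ,R) = -∂_R² w + (α/R²) w - 5 W_α(R)⁴ w`. -/
noncomputable def LinOp (α : ℝ) (w : ℝ → ℝ → ℝ) : ℝ → ℝ → ℝ := fun τ R =>
  -(deriv (deriv (w τ)) R) + (α / R ^ 2) * w τ R - 5 * (Walpha α R) ^ 4 * w τ R

open Filter Topology Function

section PartialDerivatives

variable {F : ℝ → ℝ → ℝ} {x y : ℝ}

theorem hasDerivAt_partial_fst (hF : DifferentiableAt ℝ (uncurry F) (x, y)) :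
    HasDerivAt (fun σ => F σ y) (fderiv ℝ (uncurry F) (x, y) (1, 0)) x :=
  hF.hasFDerivAt.comp_hasDerivAt (f := fun σ => (σ, y)) x
    ((hasDerivAt_id x).prodMk (hasDerivAt_const x y))

theorem hasDerivAt_partial_snd (hF : DifferentiableAt ℝ (uncurry F) (x, y)) :
    HasDerivAt (F x) (fderiv ℝ (uncurry F) (x, y) (0, 1)) y :=
  hF.hasFDerivAt.comp_hasDerivAt (f := fun R => (x, R)) y
    ((hasDerivAt_const y x).prodMk (hasDerivAt_id y))

theorem hasDerivAt_apply_curve {a b : ℝ → ℝ} {a' b' t : ℝ}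
    (hF : DifferentiableAt ℝ (uncurry F) (a t, b t))
    (ha : HasDerivAt a a' t) (hb : HasDerivAt b b' t) :
    HasDerivAt (fun s => F (a s) (b s))
      (a' * deriv (fun σ => F σ (b t)) (a t) + b' * deriv (F (a t)) (b t)) t := by
  have hcomp := hF.hasFDerivAt.comp_hasDerivAt t (ha.prodMk hb)
  have hsplit : ((a', b') : ℝ × ℝ) = a' • ((1, 0) : ℝ × ℝ) + b' • ((0, 1) : ℝ × ℝ) := by
    simp
  rwa [hsplit, map_add, map_smul, map_smul, ← (hasDerivAt_partial_fst hF).deriv,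
    ← (hasDerivAt_partial_snd hF).deriv] at hcomp

end PartialDerivatives

section Scaling

variable {ν : ℝ}

theorem LamF_tauT (hν : ν ≠ 0) {t : ℝ} (ht : 0 < t) : LamF ν (tauT ν t) = lamT ν t := by
  rw [LamF, tauT, mul_inv_cancel_left₀ hν, ← Real.rpow_mul ht.le, lamT]
  congr 1
  field_simp
  ring

theorem contDiffAt_LamF {n : WithTop ℕ∞} {σ : ℝ} (hσ : ν * σ ≠ 0) : ContDiffAt ℝ n (LamF ν) σ :=
  (contDiffAt_const.mul contDiffAt_id).rpow_const_of_ne hσ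

theorem differentiableAt_logDeriv_LamF {σ : ℝ} (hνσ : 0 < ν * σ) :
    DifferentiableAt ℝ (logDeriv (LamF ν)) σ := by
  have hC : ContDiffAt ℝ 2 (LamF ν) σ := contDiffAt_LamF hνσ.ne'
  exact ((hC.derivWithin (m := 1) (by norm_num)).differentiableAt one_ne_zero).div
    (hC.differentiableAt two_ne_zero) (Real.rpow_pos_of_pos hνσ _).ne'

theorem hasDerivAt_tauT (hν : ν ≠ 0) {t : ℝ} (ht : 0 < t) :
    HasDerivAt (tauT ν) (-lamT ν t) t := by
  have h := (Real.hasDerivAt_rpow_const (p := -ν) (Or.inl ht.ne')).const_mul ν⁻¹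
  refine h.congr_deriv ?_
  rw [lamT, show -ν - 1 = -(1 + ν) by ring]
  field_simp

/-- `λ = Λ ∘ τ`, so `λ'/λ = (Λ'/Λ)(τ) τ'`. -/
theorem hasDerivAt_lamT (hν : 0 < ν) {t : ℝ} (ht : 0 < t) :
    HasDerivAt (lamT ν) (logDeriv (LamF ν) (tauT ν t) * -lamT ν t * lamT ν t) t := by
  have hτ : 0 < tauT ν t := mul_pos (inv_pos.2 hν) (Real.rpow_pos_of_pos ht _)
  have hΛ : DifferentiableAt ℝ (LamF ν) (tauT ν t) :=
    (contDiffAt_LamF (n := 1) (mul_pos hν hτ).ne').differentiableAt one_ne_zero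
  have hcomp := hΛ.hasDerivAt.comp t (hasDerivAt_tauT hν.ne' ht)
  have heq : LamF ν ∘ tauT ν =ᶠ[𝓝 t] lamT ν := by
    filter_upwards [Ioi_mem_nhds ht] with s hs using LamF_tauT hν.ne' hs
  refine (hcomp.congr_of_eventuallyEq heq.symm).congr_deriv ?_
  have hlam : lamT ν t ≠ 0 := (Real.rpow_pos_of_pos ht _).ne'
  rw [logDeriv_apply, LamF_tauT hν.ne' ht]
  field_simp

end Scaling

section DilatedDerivative

variable {ν : ℝ} {F : ℝ → ℝ → ℝ}

/-- The hypothesis on `l` says that `l` is proportional to `Λ ∘ τ`. -/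
theorem hasDerivAt_apply_dilatedCurve {τ l : ℝ → ℝ} {τ' t r : ℝ}
    (hF : DifferentiableAt ℝ (uncurry F) (τ t, l t * r)) (hτ : HasDerivAt τ τ' t)
    (hl : HasDerivAt l (logDeriv (LamF ν) (τ t) * τ' * l t) t) :
    HasDerivAt (fun s => F (τ s) (l s * r))
      (τ' * (Dop ν F (τ t) (l t * r) + logDeriv (LamF ν) (τ t) * F (τ t) (l t * r))) t := by
  refine (hasDerivAt_apply_curve hF hτ (hl.mul_const r)).congr_deriv ?_
  rw [Dop, logDeriv_apply]
  ring

theorem hasDerivAt_inv_mul_rescaled (hν : 0 < ν) {t r : ℝ} (ht : 0 < t) (hr : r ≠ 0)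
    (hF : DifferentiableAt ℝ (uncurry F) (tauT ν t, lamT ν t * r)) :
    HasDerivAt (fun s => (lamT ν s * r)⁻¹ * F (tauT ν s) (lamT ν s * r))
      (-(r⁻¹ * Dop ν F (tauT ν t) (lamT ν t * r))) t := by
  have hlam : lamT ν t ≠ 0 := (Real.rpow_pos_of_pos ht _).ne'
  have hl := hasDerivAt_lamT hν ht
  have hprod := ((hl.mul_const r).fun_inv (mul_ne_zero hlam hr)).fun_mul
    (hasDerivAt_apply_dilatedCurve hF (hasDerivAt_tauT hν.ne' ht) hl)
  refine hprod.congr_deriv ?_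
  field_simp
  ring

theorem differentiableAt_uncurry_Dop (hν : 0 < ν) {w : ℝ → ℝ → ℝ}
    (hw : ContDiff ℝ 2 (uncurry w)) {p : ℝ × ℝ} (hp : 0 < p.1) :
    DifferentiableAt ℝ (uncurry (Dop ν w)) p := by
  have hw1 : Differentiable ℝ (uncurry w) := hw.differentiable (by norm_num)
  have hdw : Differentiable ℝ (fderiv ℝ (uncurry w)) :=
    (hw.fderiv_right (m := 1) (by norm_num)).differentiable one_ne_zero
  have hq : DifferentiableAt ℝ (fun p : ℝ × ℝ => logDeriv (LamF ν) p.1) p :=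
    (differentiableAt_logDeriv_LamF (mul_pos hν hp)).comp p differentiableAt_fst
  have heq : uncurry (Dop ν w) = fun p => fderiv ℝ (uncurry w) p (1, 0)
      + logDeriv (LamF ν) p.1 * (p.2 * fderiv ℝ (uncurry w) p (0, 1) - uncurry w p) := by
    funext ⟨σ, R⟩
    simp only [uncurry_apply_pair, Dop, logDeriv_apply,
      (hasDerivAt_partial_fst (hw1 _)).deriv, (hasDerivAt_partial_snd (hw1 _)).deriv]
  rw [heq]
  fun_prop

theorem deriv_deriv_inv_mul_rescaled (hν : 0 < ν) {w : ℝ → ℝ → ℝ}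
    (hw : ContDiff ℝ 2 (uncurry w)) {t r : ℝ} (ht : 0 < t) (hr : r ≠ 0) :
    deriv (deriv (fun s => (lamT ν s * r)⁻¹ * w (tauT ν s) (lamT ν s * r))) t
      = r⁻¹ * lamT ν t * (Dop ν (Dop ν w) (tauT ν t) (lamT ν t * r)
          + logDeriv (LamF ν) (tauT ν t) * Dop ν w (tauT ν t) (lamT ν t * r)) := by
  have hfirst : deriv (fun s => (lamT ν s * r)⁻¹ * w (tauT ν s) (lamT ν s * r))
      =ᶠ[𝓝 t] fun s => -(r⁻¹ * Dop ν w (tauT ν s) (lamT ν s * r)) := by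
    filter_upwards [Ioi_mem_nhds ht] with s hs
    exact (hasDerivAt_inv_mul_rescaled hν hs hr
      ((hw.differentiable (by norm_num)) _)).deriv
  have hτ : 0 < tauT ν t := mul_pos (inv_pos.2 hν) (Real.rpow_pos_of_pos ht _)
  have hsecond := hasDerivAt_apply_dilatedCurve (r := r)
    (differentiableAt_uncurry_Dop hν hw (p := (tauT ν t, lamT ν t * r)) hτ)
    (hasDerivAt_tauT hν.ne' ht) (hasDerivAt_lamT hν ht)
  rw [hfirst.deriv_eq, (hsecond.const_mul r⁻¹).fun_neg.deriv]
  ring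

end DilatedDerivative

section RadialLaplacian

/-- The radial part `f'' + (2/r) f'` of the Laplacian on `ℝ³`. -/
noncomputable def radialLaplacian (f : ℝ → ℝ) (r : ℝ) : ℝ :=
  deriv (deriv f) r + 2 / r * deriv f r

theorem radialLaplacian_inv_mul {h : ℝ → ℝ} {x : ℝ} (hh : Differentiable ℝ h)
    (hh' : DifferentiableAt ℝ (deriv h) x) (hx : x ≠ 0) :
    radialLaplacian (fun y => y⁻¹ * h y) x = x⁻¹ * deriv (deriv h) x := by
  have hfirst : deriv (fun y => y⁻¹ * h y)
      =ᶠ[𝓝 x] fun y => -(y ^ 2)⁻¹ * h y + y⁻¹ * deriv h y := by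
    filter_upwards [isOpen_ne.mem_nhds hx] with y hy
    refine ((hasDerivAt_inv hy).fun_mul (hh y).hasDerivAt).deriv.trans ?_
    ring
  have hsecond := ((((hasDerivAt_pow 2 x).fun_inv (pow_ne_zero 2 hx)).fun_neg.fun_mul
    (hh x).hasDerivAt).fun_add ((hasDerivAt_inv hx).fun_mul hh'.hasDerivAt))
  rw [radialLaplacian, hfirst.deriv_eq, hsecond.deriv,
    ((hasDerivAt_inv hx).fun_mul (hh x).hasDerivAt).deriv]
  field_simp
  ring

theorem radialLaplacian_inv_mul_comp_mul_left {g : ℝ → ℝ} (hg : ContDiff ℝ 2 g) {c x : ℝ}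
    (hc : c ≠ 0) (hx : x ≠ 0) :
    radialLaplacian (fun y => (c * y)⁻¹ * g (c * y)) x
      = c ^ 2 * ((c * x)⁻¹ * deriv (deriv g) (c * x)) := by
  have hg1 : Differentiable ℝ g := hg.differentiable two_ne_zero
  have hfun : (fun y => (c * y)⁻¹ * g (c * y)) = fun y => y⁻¹ * (c⁻¹ * g (c * y)) := by
    funext y
    rw [mul_inv]
    ring
  have hderiv : deriv (fun y => c⁻¹ * g (c * y)) = fun y => deriv g (c * y) := by
    funext y
    rw [deriv_const_mul _ (by fun_prop), deriv_comp_mul_left, smul_eq_mul]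
    field_simp
  have hg' : Differentiable ℝ (deriv g) := hg.differentiable_deriv_two
  rw [hfun, radialLaplacian_inv_mul (by fun_prop) (by rw [hderiv]; fun_prop) hx, hderiv,
    deriv_comp_mul_left, smul_eq_mul]
  field_simp

end RadialLaplacian

theorem change_of_variables_identity_general
    (α ν : ℝ) (hν : 0 < ν)
    (w : ℝ → ℝ → ℝ) (hw : ContDiff ℝ 2 (Function.uncurry w))
    (eps : ℝ → ℝ → ℝ)
    (heps : ∀ t r : ℝ, eps t r = (lamT ν t * r)⁻¹ * w (tauT ν t) (lamT ν t * r)) :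
    ∀ t : ℝ, 0 < t → ∀ r : ℝ, 0 < r → ∀ R : ℝ, R = lamT ν t * r →
      deriv (deriv (fun s : ℝ => eps s r)) t
        - deriv (deriv (fun s : ℝ => eps t s)) r
        - (2 / r) * deriv (fun s : ℝ => eps t s) r
        + (α / r ^ 2) * eps t r
        - 5 * (lamT ν t) ^ 2 * (Walpha α R) ^ 4 * eps t r
      = (lamT ν t) ^ 2 * R⁻¹ *
          (Dop ν (Dop ν w) (tauT ν t) R
            + (deriv (LamF ν) (tauT ν t) / LamF ν (tauT ν t)) * Dop ν w (tauT ν t) R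
            + LinOp α w (tauT ν t) R) := by
  intro t ht r hr R hR
  subst hR
  have hlam : lamT ν t ≠ 0 := (Real.rpow_pos_of_pos ht _).ne'
  have htime : (fun s => eps s r) = fun s => (lamT ν s * r)⁻¹ * w (tauT ν s) (lamT ν s * r) :=
    funext fun s => heps s r
  have hspace : (fun s => eps t s) = fun s => (lamT ν t * s)⁻¹ * w (tauT ν t) (lamT ν t * s) :=
    funext (heps t)
  have hwτ : ContDiff ℝ 2 (w (tauT ν t)) := hw.comp (contDiff_const.prodMk contDiff_id)
  have hradial := radialLaplacian_inv_mul_comp_mul_left hwτ hlam hr.ne'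
  rw [radialLaplacian, ← hspace] at hradial
  rw [htime, deriv_deriv_inv_mul_rescaled hν hw ht hr.ne', heps t r, ← logDeriv_apply, LinOp]
  linear_combination (norm := skip) -hradial
  field_simp
  ring

/-- The change of variables `(t,r) ↦ (τ,R)` with `ε(t,r) = (λ(t)r)⁻¹ w(τ(t), λ(t)r)`
converts the perturbed wave operator with time-dependent potential into the dilated
operator `𝒟² + (Λ'/Λ)𝒟 + 𝓛`. -/
theorem change_of_variables_identity
    (α ν : ℝ) (hα : -(1 / 4 : ℝ) < α) (hν : 0 < ν)
    (w : ℝ → ℝ → ℝ) (hw : ContDiff ℝ 2 (Function.uncurry w))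
    (eps : ℝ → ℝ → ℝ)
    (heps : ∀ t r : ℝ, eps t r = (lamT ν t * r)⁻¹ * w (tauT ν t) (lamT ν t * r)) :
    ∀ t : ℝ, 0 < t → ∀ r : ℝ, 0 < r → ∀ R : ℝ, R = lamT ν t * r →
      deriv (deriv (fun s : ℝ => eps s r)) t
        - deriv (deriv (fun s : ℝ => eps t s)) r
        - (2 / r) * deriv (fun s : ℝ => eps t s) r
        + (α / r ^ 2) * eps t r
        - 5 * (lamT ν t) ^ 2 * (Walpha α R) ^ 4 * eps t r
      = (lamT ν t) ^ 2 * R⁻¹ *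
          (Dop ν (Dop ν w) (tauT ν t) R
            + (deriv (LamF ν) (tauT ν t) / LamF ν (tauT ν t)) * Dop ν w (tauT ν t) R
            + LinOp α w (tauT ν t) R) :=
  change_of_variables_identity_general α ν hν w hw eps heps
end

section
/- Let ν > 0, λ(τ) = (ντ)^{1+1/ν}, ω(τ) = ν^{−1/ν}·(1 − τ^{−1/ν}). There exists a constant C > 0 depending only on ν such that for all 1 ≤ τ ≤ σ and all ξ > 0: | (λ(τ)/λ(σ))·ξ^{−1/2}·sin( λ(σ)·√ξ·(ω(σ) − ω(τ)) ) | ≤ C·τ·(1+ξ)^{−1/2}. -/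
/-- `λ(τ) = (ντ)^{1+1/ν}`. -/
noncomputable def lamF (ν τ : ℝ) : ℝ := (ν * τ) ^ (1 + 1 / ν)

/-- `ω(τ) = ν^{-1/ν} (1 - τ^{-1/ν})`. -/
noncomputable def omegaF (ν τ : ℝ) : ℝ := ν ^ (-(1 / ν)) * (1 - τ ^ (-(1 / ν)))

set_option maxHeartbeats 1000000 in
/-- Pointwise kernel bound for the wave parametrix: for `1 ≤ τ ≤ σ` and `ξ > 0`,
`|(λ(τ)/λ(σ)) ξ^{-1/2} sin(λ(σ) √ξ (ω(σ)-ω(τ)))| ≤ C τ (1+ξ)^{-1/2}`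
with `C` depending only on `ν`. -/
theorem parametrix_kernel_bound (ν : ℝ) (hν : 0 < ν) :
    ∃ C : ℝ, 0 < C ∧ ∀ τ σ : ℝ, 1 ≤ τ → τ ≤ σ → ∀ ξ : ℝ, 0 < ξ →
      |lamF ν τ / lamF ν σ * ξ ^ (-(1 : ℝ) / 2) *
          Real.sin (lamF ν σ * Real.sqrt ξ * (omegaF ν σ - omegaF ν τ))|
        ≤ C * τ * (1 + ξ) ^ (-(1 : ℝ) / 2) := by
  refine ⟨Real.sqrt 2 * (ν + 1), by positivity, ?_⟩
  intro τ σ hτ hτσ ξ hξ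
  have hτ0 : (0:ℝ) < τ := lt_of_lt_of_le one_pos hτ
  have hσ0 : (0:ℝ) < σ := lt_of_lt_of_le hτ0 hτσ
  have hντ : 0 < ν * τ := by positivity
  have hνσ : 0 < ν * σ := by positivity
  have hlτ : 0 < lamF ν τ := Real.rpow_pos_of_pos hντ _
  have hlσ : 0 < lamF ν σ := Real.rpow_pos_of_pos hνσ _
  have hexp : (0:ℝ) ≤ 1 + 1 / ν := by positivity
  have hratio : lamF ν τ / lamF ν σ ≤ 1 := by
    rw [div_le_one hlσ]
    exact Real.rpow_le_rpow hντ.le (by nlinarith) hexp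
  have hratio0 : 0 ≤ lamF ν τ / lamF ν σ := le_of_lt (div_pos hlτ hlσ)
  have hξhalf : ξ ^ (-(1:ℝ)/2) = (Real.sqrt ξ)⁻¹ := by
    rw [neg_div, Real.rpow_neg hξ.le, ← Real.sqrt_eq_rpow]
  -- ω difference bounds
  have hωτ : (0:ℝ) < τ ^ (-(1/ν)) := Real.rpow_pos_of_pos hτ0 _
  have hωσ : (0:ℝ) < σ ^ (-(1/ν)) := Real.rpow_pos_of_pos hσ0 _
  have hmono : σ ^ (-(1/ν)) ≤ τ ^ (-(1/ν)) := by
    rw [Real.rpow_neg hσ0.le, Real.rpow_neg hτ0.le]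
    exact inv_anti₀ (Real.rpow_pos_of_pos hτ0 _)
      (Real.rpow_le_rpow hτ0.le hτσ (by positivity))
  have hνp : (0:ℝ) < ν ^ (-(1/ν)) := Real.rpow_pos_of_pos hν _
  have hωdiff : omegaF ν σ - omegaF ν τ
      = ν ^ (-(1/ν)) * (τ ^ (-(1/ν)) - σ ^ (-(1/ν))) := by
    simp [omegaF]; ring
  have hω0 : 0 ≤ omegaF ν σ - omegaF ν τ := by
    rw [hωdiff]; exact mul_nonneg hνp.le (by linarith)
  have hωle : omegaF ν σ - omegaF ν τ ≤ (ν * τ) ^ (-(1/ν)) := by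
    rw [hωdiff, Real.mul_rpow hν.le hτ0.le]
    have := mul_le_mul_of_nonneg_left (show τ ^ (-(1/ν)) - σ ^ (-(1/ν)) ≤ τ ^ (-(1/ν)) by linarith) hνp.le
    linarith
  have hlamω : lamF ν τ * (omegaF ν σ - omegaF ν τ) ≤ ν * τ := by
    calc lamF ν τ * (omegaF ν σ - omegaF ν τ)
        ≤ lamF ν τ * (ν * τ) ^ (-(1/ν)) := by
          exact mul_le_mul_of_nonneg_left hωle hlτ.le
      _ = ν * τ := by
          rw [lamF, ← Real.rpow_add hντ]
          norm_num
  set x := lamF ν σ * Real.sqrt ξ * (omegaF ν σ - omegaF ν τ) with hx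
  have hx0 : 0 ≤ x := by
    apply mul_nonneg (mul_nonneg hlσ.le (Real.sqrt_nonneg _)) hω0
  have habs : |lamF ν τ / lamF ν σ * ξ ^ (-(1:ℝ)/2) * Real.sin x|
      = lamF ν τ / lamF ν σ * ξ ^ (-(1:ℝ)/2) * |Real.sin x| := by
    rw [abs_mul]
    congr 1
    exact abs_of_nonneg (mul_nonneg hratio0 (Real.rpow_nonneg hξ.le _))
  rw [habs]
  rcases le_total 1 ξ with hξ1 | hξ1
  · -- ξ ≥ 1 : |sin| ≤ 1, ξ^{-1/2} ≤ √2 (1+ξ)^{-1/2}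
    have h1 : lamF ν τ / lamF ν σ * ξ ^ (-(1:ℝ)/2) * |Real.sin x|
        ≤ ξ ^ (-(1:ℝ)/2) := by
      calc lamF ν τ / lamF ν σ * ξ ^ (-(1:ℝ)/2) * |Real.sin x|
          ≤ 1 * ξ ^ (-(1:ℝ)/2) * 1 := by
            apply mul_le_mul (mul_le_mul_of_nonneg_right hratio (Real.rpow_nonneg hξ.le _))
              (Real.abs_sin_le_one x) (abs_nonneg _)
            positivity
        _ = ξ ^ (-(1:ℝ)/2) := by ring
    have h2 : ξ ^ (-(1:ℝ)/2) ≤ Real.sqrt 2 * (1 + ξ) ^ (-(1:ℝ)/2) := by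
      have hs : Real.sqrt (1 + ξ) ≤ Real.sqrt 2 * Real.sqrt ξ := by
        rw [← Real.sqrt_mul (by norm_num : (0:ℝ) ≤ 2)]
        exact Real.sqrt_le_sqrt (by linarith)
      rw [hξhalf, show ((1:ℝ)+ξ) ^ (-(1:ℝ)/2) = (Real.sqrt (1+ξ))⁻¹ from by
        rw [neg_div, Real.rpow_neg (by linarith), ← Real.sqrt_eq_rpow]]
      have hsξ : 0 < Real.sqrt ξ := Real.sqrt_pos.mpr hξ
      have hs1ξ : 0 < Real.sqrt (1+ξ) := Real.sqrt_pos.mpr (by linarith)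
      have hne1 : Real.sqrt ξ ≠ 0 := ne_of_gt hsξ
      have hne2 : Real.sqrt (1+ξ) ≠ 0 := ne_of_gt hs1ξ
      calc (Real.sqrt ξ)⁻¹
          = (Real.sqrt (1+ξ))⁻¹ * (Real.sqrt ξ)⁻¹ * Real.sqrt (1+ξ) := by
            field_simp
        _ ≤ (Real.sqrt (1+ξ))⁻¹ * (Real.sqrt ξ)⁻¹ * (Real.sqrt 2 * Real.sqrt ξ) := by
            apply mul_le_mul_of_nonneg_left hs
            positivity
        _ = Real.sqrt 2 * (Real.sqrt (1+ξ))⁻¹ := by field_simp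
    calc lamF ν τ / lamF ν σ * ξ ^ (-(1:ℝ)/2) * |Real.sin x|
        ≤ Real.sqrt 2 * (1 + ξ) ^ (-(1:ℝ)/2) := le_trans h1 h2
      _ ≤ Real.sqrt 2 * (ν + 1) * τ * (1 + ξ) ^ (-(1:ℝ)/2) := by
          have h3 : (1:ℝ) ≤ (ν + 1) * τ := by nlinarith
          have h4 : (0:ℝ) ≤ (1 + ξ) ^ (-(1:ℝ)/2) := Real.rpow_nonneg (by linarith) _
          nlinarith [mul_nonneg (mul_nonneg (Real.sqrt_nonneg 2) h4)
            (by linarith : (0:ℝ) ≤ (ν + 1) * τ - 1)]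
  · -- ξ ≤ 1 : |sin x| ≤ x
    have h1 : lamF ν τ / lamF ν σ * ξ ^ (-(1:ℝ)/2) * |Real.sin x|
        ≤ ν * τ := by
      have hsin : |Real.sin x| ≤ x := by
        calc |Real.sin x| ≤ |x| := Real.abs_sin_le_abs
          _ = x := abs_of_nonneg hx0
      calc lamF ν τ / lamF ν σ * ξ ^ (-(1:ℝ)/2) * |Real.sin x|
          ≤ lamF ν τ / lamF ν σ * ξ ^ (-(1:ℝ)/2) * x := by
            apply mul_le_mul_of_nonneg_left hsin
            exact mul_nonneg hratio0 (Real.rpow_nonneg hξ.le _)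
        _ = lamF ν τ * (omegaF ν σ - omegaF ν τ) * (ξ ^ (-(1:ℝ)/2) * Real.sqrt ξ) := by
            rw [hx]; field_simp
        _ = lamF ν τ * (omegaF ν σ - omegaF ν τ) := by
            rw [hξhalf, inv_mul_cancel₀ (ne_of_gt (Real.sqrt_pos.mpr hξ)), mul_one]
        _ ≤ ν * τ := hlamω
    have h2 : ν * τ ≤ Real.sqrt 2 * (ν + 1) * τ * (1 + ξ) ^ (-(1:ℝ)/2) := by
      have hk : (Real.sqrt 2)⁻¹ ≤ (1 + ξ) ^ (-(1:ℝ)/2) := by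
        rw [show ((1:ℝ)+ξ) ^ (-(1:ℝ)/2) = (Real.sqrt (1+ξ))⁻¹ from by
          rw [neg_div, Real.rpow_neg (by linarith), ← Real.sqrt_eq_rpow]]
        exact inv_anti₀ (Real.sqrt_pos.mpr (by linarith))
          (Real.sqrt_le_sqrt (by linarith))
      have h5 : Real.sqrt 2 * (ν + 1) * τ * (Real.sqrt 2)⁻¹
          ≤ Real.sqrt 2 * (ν + 1) * τ * ((1 + ξ) ^ (-(1:ℝ)/2)) := by
        apply mul_le_mul_of_nonneg_left hk
        positivity
      have h6 : Real.sqrt 2 * (ν + 1) * τ * (Real.sqrt 2)⁻¹ = (ν + 1) * τ := by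
        have : Real.sqrt 2 ≠ 0 := ne_of_gt (Real.sqrt_pos.mpr (by norm_num))
        field_simp
      have h7 : ν * τ ≤ (ν + 1) * τ := by nlinarith
      calc ν * τ ≤ (ν + 1) * τ := h7
        _ = Real.sqrt 2 * (ν + 1) * τ * (Real.sqrt 2)⁻¹ := h6.symm
        _ ≤ Real.sqrt 2 * (ν + 1) * τ * (1 + ξ) ^ (-(1:ℝ)/2) := h5
    exact le_trans h1 h2
end

section
/- Let ν > 0, λ(τ) = (ντ)^{1+1/ν}, ω(τ) = ν^{−1/ν}·(1 − τ^{−1/ν}), let τ₀ ≥ 1 and let N ≥ 2 be a real number. There exists a constant C depending only on ν (independent of N and τ₀) such that: for every continuous y : [τ₀,∞) → ℝ with M := sup_{σ≥τ₀} σ^N·|y(σ)| < ∞, the integral x₀(τ) := ∫_τ^∞ λ(τ)·(ω(σ) − ω(τ))·y(σ) dσ converges absolutely for every τ ≥ τ₀, and sup_{τ≥τ₀} τ^{N−2}·|x₀(τ)| ≤ (C/N)·M. -/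
open MeasureTheory

lemma kernel_bound (ν : ℝ) (hν : 0 < ν) {τ σ : ℝ} (hτ : 1 ≤ τ) (hσ : τ ≤ σ) :
    |lamF ν τ * (omegaF ν σ - omegaF ν τ)| ≤ ν * τ := by
  have hτ0 : (0:ℝ) < τ := by linarith
  have hσ0 : (0:ℝ) < σ := by linarith
  have hdiff : omegaF ν σ - omegaF ν τ
      = ν ^ (-(1/ν)) * (τ ^ (-(1/ν)) - σ ^ (-(1/ν))) := by
    unfold omegaF; ring
  have hneg : -(1/ν) ≤ 0 := neg_nonpos.2 (by positivity)
  have h1 : (0:ℝ) ≤ τ ^ (-(1/ν)) - σ ^ (-(1/ν)) :=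
    sub_nonneg.2 (Real.rpow_le_rpow_of_nonpos hτ0 hσ hneg)
  have h2 : τ ^ (-(1/ν)) - σ ^ (-(1/ν)) ≤ τ ^ (-(1/ν)) := by
    have : (0:ℝ) ≤ σ ^ (-(1/ν)) := Real.rpow_nonneg hσ0.le _
    linarith
  have hA : (0:ℝ) ≤ lamF ν τ * ν ^ (-(1/ν)) := by
    have := Real.rpow_nonneg (mul_nonneg hν.le hτ0.le) (1 + 1/ν)
    have := Real.rpow_nonneg hν.le (-(1/ν))
    unfold lamF
    positivity
  have hprod : lamF ν τ * ν ^ (-(1/ν)) * τ ^ (-(1/ν)) = ν * τ := by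
    unfold lamF
    have e1 : ν^(1+1/ν) * ν^(-(1/ν)) = ν := by
      rw [← Real.rpow_add hν, show (1+1/ν) + -(1/ν) = 1 by ring, Real.rpow_one]
    have e2 : τ^(1+1/ν) * τ^(-(1/ν)) = τ := by
      rw [← Real.rpow_add hτ0, show (1+1/ν) + -(1/ν) = 1 by ring, Real.rpow_one]
    calc (ν*τ)^(1+1/ν) * ν^(-(1/ν)) * τ^(-(1/ν))
        = (ν^(1+1/ν) * ν^(-(1/ν))) * (τ^(1+1/ν) * τ^(-(1/ν))) := by
          rw [Real.mul_rpow hν.le hτ0.le]; ring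
      _ = ν * τ := by rw [e1, e2]
  have hexpr : lamF ν τ * (omegaF ν σ - omegaF ν τ)
      = (lamF ν τ * ν ^ (-(1/ν))) * (τ ^ (-(1/ν)) - σ ^ (-(1/ν))) := by
    rw [hdiff]; ring
  rw [hexpr, abs_of_nonneg (mul_nonneg hA h1), ← hprod]
  exact mul_le_mul_of_nonneg_left h2 hA

/-- The zero-frequency parametrix `x₀(τ) = ∫_τ^∞ λ(τ)(ω(σ)-ω(τ)) y(σ) dσ` converges
absolutely and satisfies `sup_{τ≥τ₀} τ^{N-2} |x₀(τ)| ≤ (C/N) sup_{σ≥τ₀} σ^N |y(σ)|`,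
with `C` depending only on `ν`. -/
theorem zero_mode_parametrix_bound (ν : ℝ) (hν : 0 < ν) :
    ∃ C : ℝ, 0 < C ∧ ∀ τ₀ : ℝ, 1 ≤ τ₀ → ∀ N : ℝ, 2 ≤ N →
      ∀ y : ℝ → ℝ, ContinuousOn y (Set.Ici τ₀) →
        ∀ M : ℝ, (∀ σ : ℝ, τ₀ ≤ σ → σ ^ N * |y σ| ≤ M) →
          (∀ τ : ℝ, τ₀ ≤ τ →
            IntegrableOn (fun σ => lamF ν τ * (omegaF ν σ - omegaF ν τ) * y σ)
              (Set.Ici τ)) ∧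
          (∀ τ : ℝ, τ₀ ≤ τ →
            τ ^ (N - 2) *
                |∫ σ in Set.Ici τ, lamF ν τ * (omegaF ν σ - omegaF ν τ) * y σ|
              ≤ C / N * M) := by
  refine ⟨2 * ν, by positivity, fun τ₀ hτ₀ N hN y hy M hM => ?_⟩
  have hM0 : 0 ≤ M := le_trans (by positivity) (hM τ₀ le_rfl)
  -- pointwise bound
  have hbd : ∀ τ, τ₀ ≤ τ → ∀ σ, τ ≤ σ →
      ‖lamF ν τ * (omegaF ν σ - omegaF ν τ) * y σ‖ ≤ ν * τ * M * σ ^ (-N) := by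
    intro τ hτ σ hσ
    have hτ1 : 1 ≤ τ := le_trans hτ₀ hτ
    have hσ0 : (0:ℝ) < σ := by linarith
    have hy' : |y σ| ≤ M * σ ^ (-N) := by
      have h := hM σ (le_trans hτ hσ)
      have hpow : (0:ℝ) < σ ^ N := Real.rpow_pos_of_pos hσ0 N
      have hinv : σ ^ (-N) * σ ^ N = 1 := by
        rw [← Real.rpow_add hσ0]; norm_num
      calc |y σ| = σ ^ (-N) * (σ ^ N * |y σ|) := by
            rw [← mul_assoc, hinv, one_mul]
        _ ≤ σ ^ (-N) * M :=
            mul_le_mul_of_nonneg_left h (Real.rpow_nonneg hσ0.le _)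
        _ = M * σ ^ (-N) := mul_comm _ _
    calc ‖lamF ν τ * (omegaF ν σ - omegaF ν τ) * y σ‖
        = |lamF ν τ * (omegaF ν σ - omegaF ν τ)| * |y σ| := abs_mul _ _
      _ ≤ (ν * τ) * (M * σ ^ (-N)) := by
          apply mul_le_mul (kernel_bound ν hν hτ1 hσ) hy' (abs_nonneg _)
          positivity
      _ = ν * τ * M * σ ^ (-N) := by ring
  have hint : ∀ τ, τ₀ ≤ τ →
      IntegrableOn (fun σ => lamF ν τ * (omegaF ν σ - omegaF ν τ) * y σ) (Set.Ici τ) := by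
    intro τ hτ
    have hτ0 : (0:ℝ) < τ := by linarith
    have hg : IntegrableOn (fun σ => ν * τ * M * σ ^ (-N)) (Set.Ici τ) := by
      rw [integrableOn_Ici_iff_integrableOn_Ioi]
      exact (integrableOn_Ioi_rpow_of_lt (by linarith) hτ0).const_mul _
    have hcont : ContinuousOn (fun σ => lamF ν τ * (omegaF ν σ - omegaF ν τ) * y σ)
        (Set.Ici τ) := by
      apply ContinuousOn.mul
      · apply continuousOn_const.mul
        apply ContinuousOn.sub _ continuousOn_const
        unfold omegaF
        apply continuousOn_const.mul
        apply continuousOn_const.sub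
        exact continuousOn_id.rpow_const fun x hx =>
          Or.inl (ne_of_gt (lt_of_lt_of_le hτ0 hx))
      · exact hy.mono (Set.Ici_subset_Ici.2 hτ)
    refine hg.mono' (hcont.aestronglyMeasurable measurableSet_Ici) ?_
    refine (ae_restrict_iff' measurableSet_Ici).2 (Filter.Eventually.of_forall ?_)
    exact fun σ hσ => hbd τ hτ σ hσ
  refine ⟨hint, fun τ hτ => ?_⟩
  have hτ0 : (0:ℝ) < τ := by linarith
  have hN1 : (0:ℝ) < N - 1 := by linarith
  have hg : IntegrableOn (fun σ => ν * τ * M * σ ^ (-N)) (Set.Ici τ) := by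
    rw [integrableOn_Ici_iff_integrableOn_Ioi]
    exact (integrableOn_Ioi_rpow_of_lt (by linarith) hτ0).const_mul _
  have hintval : ∫ σ in Set.Ici τ, ν * τ * M * σ ^ (-N)
      = ν * τ * M * (τ ^ (1-N) / (N-1)) := by
    rw [MeasureTheory.integral_Ici_eq_integral_Ioi, MeasureTheory.integral_const_mul,
      integral_Ioi_rpow_of_lt (by linarith) hτ0]
    congr 1
    rw [show (-N) + 1 = 1 - N by ring, show (1:ℝ) - N = -(N-1) by ring, neg_div_neg_eq]
  have habs : |∫ σ in Set.Ici τ, lamF ν τ * (omegaF ν σ - omegaF ν τ) * y σ|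
      ≤ ν * τ * M * (τ ^ (1-N) / (N-1)) := by
    rw [← hintval, ← Real.norm_eq_abs]
    refine norm_integral_le_of_norm_le hg ?_
    refine (ae_restrict_iff' measurableSet_Ici).2 (Filter.Eventually.of_forall ?_)
    exact fun σ hσ => hbd τ hτ σ hσ
  have hpows : τ ^ (N-2) * (ν * τ * M * (τ ^ (1-N) / (N-1))) = ν * M / (N-1) := by
    have h1 : τ ^ (N-2) * τ ^ (1-N) = τ ^ (-1 : ℝ) := by
      rw [← Real.rpow_add hτ0]; norm_num
    have h2 : τ ^ (-1 : ℝ) * τ = 1 := by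
      rw [Real.rpow_neg_one]
      exact inv_mul_cancel₀ hτ0.ne'
    calc τ ^ (N-2) * (ν * τ * M * (τ ^ (1-N) / (N-1)))
        = (τ ^ (N-2) * τ ^ (1-N)) * τ * (ν * M / (N-1)) := by ring
      _ = (τ ^ (-1:ℝ) * τ) * (ν * M / (N-1)) := by rw [h1]
      _ = ν * M / (N-1) := by rw [h2, one_mul]
  calc τ ^ (N - 2) * |∫ σ in Set.Ici τ, lamF ν τ * (omegaF ν σ - omegaF ν τ) * y σ|
      ≤ τ ^ (N-2) * (ν * τ * M * (τ ^ (1-N) / (N-1))) :=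
        mul_le_mul_of_nonneg_left habs (Real.rpow_nonneg hτ0.le _)
    _ = ν * M / (N-1) := hpows
    _ ≤ 2 * ν / N * M := by
        rw [div_mul_eq_mul_div, div_le_div_iff₀ hN1 (by linarith : (0:ℝ) < N)]
        nlinarith [mul_nonneg hν.le hM0]
end

section
/- Let k > 0 and N ≥ 0 be real numbers. There exists a constant C = C(N,k) such that: for every continuous y : [1,∞) → ℝ with M := sup_{σ≥1} σ^N·|y(σ)| < ∞, the function x(τ) := ∫_τ^∞ (2k)^{−1}·e^{−k(σ−τ)}·y(σ) dσ + ∫_1^τ (2k)^{−1}·e^{−k(τ−σ)}·y(σ) dσ is well defined (the improper integral converges absolutely) and satisfies sup_{τ≥1} τ^N·|x(τ)| ≤ C·M. -/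
/-! The Green's function splits `x` into a tail `∫_τ^∞` and a near part `∫_1^τ`. On the tail
`σ ≥ τ`, so `|y σ| ≤ M τ^{-N}`, and the kernel integrates to `1/k`. On the near part the weight
loss `(τ/σ)^N` is absorbed by half of the decay `e^{-k(τ-σ)}`: for `0 < a ≤ 1` with `N a ≤ k/2`,
`a τ ≤ σ e^{a(τ-σ)}` gives `τ^N ≤ a^{-N} σ^N e^{(k/2)(τ-σ)}`, and the remaining factor
`e^{-(k/2)(τ-σ)}` integrates to at most `2/k`. -/

open MeasureTheory Set Real

section ExpKernel

variable {c : ℝ}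

theorem integrableOn_exp_neg_mul_sub_Ici (hc : 0 < c) (τ : ℝ) :
    IntegrableOn (fun σ => exp (-c * (σ - τ))) (Ici τ) := by
  rw [integrableOn_Ici_iff_integrableOn_Ioi]
  refine IntegrableOn.congr_fun ((integrableOn_exp_mul_Ioi (neg_neg_of_pos hc) τ).const_mul
    (exp (c * τ))) (fun σ _ => ?_) measurableSet_Ioi
  rw [← exp_add]; ring_nf

theorem integral_exp_neg_mul_sub_Ici (hc : 0 < c) (τ : ℝ) :
    ∫ σ in Ici τ, exp (-c * (σ - τ)) = c⁻¹ := by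
  have h (σ : ℝ) : exp (-c * (σ - τ)) = exp (c * τ) * exp (-c * σ) := by
    rw [← exp_add]; ring_nf
  simp_rw [integral_Ici_eq_integral_Ioi, h, integral_const_mul,
    integral_exp_mul_Ioi (neg_neg_of_pos hc)]
  rw [neg_div_neg_eq, ← mul_div_assoc, ← exp_add, neg_mul, add_neg_cancel, exp_zero, one_div]

theorem intervalIntegral_exp_mul_sub_le_inv (hc : 0 < c) (a b : ℝ) :
    ∫ σ in a..b, exp (c * (σ - b)) ≤ c⁻¹ := by
  simp_rw [mul_sub]
  rw [intervalIntegral.integral_comp_mul_sub (fun x => exp x) hc.ne', integral_exp, sub_self,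
    exp_zero, smul_eq_mul]
  exact mul_le_of_le_one_right (inv_nonneg.2 hc.le) (by linarith [exp_pos (c * a - c * b)])

end ExpKernel

theorem exists_pos_le_one_mul_le {N c : ℝ} (hN : 0 ≤ N) (hc : 0 < c) :
    ∃ a : ℝ, 0 < a ∧ a ≤ 1 ∧ N * a ≤ c := by
  -- the `+ 1` keeps `a` positive when `N = 0`
  refine ⟨min 1 (c / (N + 1)), lt_min one_pos (by positivity), min_le_left _ _, ?_⟩
  calc N * min 1 (c / (N + 1)) ≤ (N + 1) * (c / (N + 1)) :=
        mul_le_mul (by linarith) (min_le_right _ _) (lt_min one_pos (by positivity)).le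
          (by linarith)
    _ = c := by field_simp

theorem mul_le_mul_exp_mul_sub {a σ τ : ℝ} (ha0 : 0 ≤ a) (ha1 : a ≤ 1) (hσ : 1 ≤ σ)
    (hστ : σ ≤ τ) : a * τ ≤ σ * exp (a * (τ - σ)) :=
  calc a * τ ≤ σ * (a * (τ - σ) + 1) := by nlinarith [mul_nonneg ha0 (sub_nonneg.2 hστ)]
    _ ≤ σ * exp (a * (τ - σ)) := by gcongr; exact add_one_le_exp _

theorem rpow_le_rpow_neg_mul_rpow_mul_exp {a c N σ τ : ℝ} (ha0 : 0 < a) (ha1 : a ≤ 1)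
    (hN : 0 ≤ N) (haN : N * a ≤ c) (hσ : 1 ≤ σ) (hστ : σ ≤ τ) :
    τ ^ N ≤ a ^ (-N) * (σ ^ N * exp (c * (τ - σ))) := by
  have h : (a * τ) ^ N ≤ σ ^ N * exp (c * (τ - σ)) :=
    calc (a * τ) ^ N ≤ (σ * exp (a * (τ - σ))) ^ N :=
          rpow_le_rpow (by nlinarith) (mul_le_mul_exp_mul_sub ha0.le ha1 hσ hστ) hN
      _ = σ ^ N * exp (N * a * (τ - σ)) := by
          rw [mul_rpow (by linarith) (exp_pos _).le, ← exp_mul]; ring_nf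
      _ ≤ σ ^ N * exp (c * (τ - σ)) := by gcongr
  rw [mul_rpow ha0.le (by linarith)] at h
  rwa [rpow_neg ha0.le, ← div_eq_inv_mul, le_div_iff₀' (rpow_pos_of_pos ha0 N)]

theorem abs_le_div_rpow_of_rpow_mul_abs_le {N τ σ x M : ℝ} (hN : 0 ≤ N) (hτ : 0 < τ)
    (hτσ : τ ≤ σ) (h : σ ^ N * |x| ≤ M) : |x| ≤ M / τ ^ N := by
  rw [le_div_iff₀' (rpow_pos_of_pos hτ N)]
  exact (mul_le_mul_of_nonneg_right (rpow_le_rpow hτ.le hτσ hN) (abs_nonneg _)).trans h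

section Tail

variable {k τ B : ℝ} {y : ℝ → ℝ}

theorem ae_norm_exp_neg_mul_sub_mul_le (hB : ∀ σ ∈ Ici τ, |y σ| ≤ B) :
    ∀ᵐ σ ∂volume.restrict (Ici τ), ‖exp (-k * (σ - τ)) * y σ‖ ≤ B * exp (-k * (σ - τ)) := by
  filter_upwards [ae_restrict_mem measurableSet_Ici] with σ hσ
  rw [norm_mul, norm_of_nonneg (exp_pos _).le, mul_comm]
  exact mul_le_mul_of_nonneg_right (hB σ hσ) (exp_pos _).le

theorem integrableOn_exp_neg_mul_sub_mul_Ici (hk : 0 < k) (hy : ContinuousOn y (Ici τ))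
    (hB : ∀ σ ∈ Ici τ, |y σ| ≤ B) :
    IntegrableOn (fun σ => exp (-k * (σ - τ)) * y σ) (Ici τ) :=
  ((integrableOn_exp_neg_mul_sub_Ici hk τ).const_mul B).mono'
    ((by fun_prop : Continuous fun σ => exp (-k * (σ - τ))).continuousOn.mul hy
      |>.aestronglyMeasurable measurableSet_Ici)
    (ae_norm_exp_neg_mul_sub_mul_le hB)

theorem abs_integral_exp_neg_mul_sub_mul_Ici_le (hk : 0 < k) (hB : ∀ σ ∈ Ici τ, |y σ| ≤ B) :
    |∫ σ in Ici τ, exp (-k * (σ - τ)) * y σ| ≤ B / k :=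
  calc |∫ σ in Ici τ, exp (-k * (σ - τ)) * y σ|
      ≤ ∫ σ in Ici τ, B * exp (-k * (σ - τ)) :=
        norm_integral_le_of_norm_le ((integrableOn_exp_neg_mul_sub_Ici hk τ).const_mul B)
          (ae_norm_exp_neg_mul_sub_mul_le hB)
    _ = B / k := by
        rw [integral_const_mul, integral_exp_neg_mul_sub_Ici hk, div_eq_mul_inv]

end Tail

theorem rpow_mul_abs_integral_exp_neg_mul_sub_mul_Ici_le {k N τ M : ℝ} {y : ℝ → ℝ}
    (hk : 0 < k) (hN : 0 ≤ N) (hτ : 0 < τ) (hM : ∀ σ ∈ Ici τ, σ ^ N * |y σ| ≤ M) :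
    τ ^ N * |∫ σ in Ici τ, exp (-k * (σ - τ)) * y σ| ≤ M / k := by
  have h := abs_integral_exp_neg_mul_sub_mul_Ici_le hk
    fun σ hσ => abs_le_div_rpow_of_rpow_mul_abs_le hN hτ hσ (hM σ hσ)
  rwa [div_right_comm, le_div_iff₀' (rpow_pos_of_pos hτ N)] at h

theorem rpow_mul_abs_intervalIntegral_exp_neg_mul_sub_mul_le {k N a τ M : ℝ} {y : ℝ → ℝ}
    (hk : 0 < k) (hN : 0 ≤ N) (ha0 : 0 < a) (ha1 : a ≤ 1) (haN : N * a ≤ k / 2) (hτ : 1 ≤ τ)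
    (hM : ∀ σ ∈ Icc 1 τ, σ ^ N * |y σ| ≤ M) :
    τ ^ N * |∫ σ in (1 : ℝ)..τ, exp (-k * (τ - σ)) * y σ| ≤ a ^ (-N) * M * (2 / k) := by
  have hM0 : 0 ≤ M := (mul_nonneg (rpow_nonneg zero_le_one _) (abs_nonneg _)).trans
    (hM 1 ⟨le_rfl, hτ⟩)
  have hle : ∀ σ ∈ Ioc 1 τ,
      ‖τ ^ N * (exp (-k * (τ - σ)) * y σ)‖ ≤ a ^ (-N) * M * exp (k / 2 * (σ - τ)) := by
    intro σ ⟨hσ1, hστ⟩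
    have hτN := rpow_le_rpow_neg_mul_rpow_mul_exp ha0 ha1 hN haN hσ1.le hστ
    have hexp : exp (k / 2 * (τ - σ)) * exp (-k * (τ - σ)) = exp (k / 2 * (σ - τ)) := by
      rw [← exp_add]; ring_nf
    rw [norm_mul, norm_mul, norm_of_nonneg (rpow_nonneg (by linarith) _),
      norm_of_nonneg (exp_pos _).le, Real.norm_eq_abs]
    calc τ ^ N * (exp (-k * (τ - σ)) * |y σ|)
        ≤ a ^ (-N) * (σ ^ N * exp (k / 2 * (τ - σ))) * (exp (-k * (τ - σ)) * |y σ|) := by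
          gcongr
      _ = a ^ (-N) * exp (k / 2 * (σ - τ)) * (σ ^ N * |y σ|) := by rw [← hexp]; ring
      _ ≤ a ^ (-N) * exp (k / 2 * (σ - τ)) * M := by gcongr; exact hM σ ⟨hσ1.le, hστ⟩
      _ = a ^ (-N) * M * exp (k / 2 * (σ - τ)) := by ring
  calc τ ^ N * |∫ σ in (1 : ℝ)..τ, exp (-k * (τ - σ)) * y σ|
      = ‖∫ σ in (1 : ℝ)..τ, τ ^ N * (exp (-k * (τ - σ)) * y σ)‖ := by
        rw [intervalIntegral.integral_const_mul, norm_mul, Real.norm_eq_abs, Real.norm_eq_abs,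
          abs_of_nonneg (rpow_nonneg (by linarith) _)]
    _ ≤ ∫ σ in (1 : ℝ)..τ, a ^ (-N) * M * exp (k / 2 * (σ - τ)) :=
        intervalIntegral.norm_integral_le_of_norm_le hτ (ae_of_all _ hle)
          (by apply Continuous.intervalIntegrable; fun_prop)
    _ = a ^ (-N) * M * ∫ σ in (1 : ℝ)..τ, exp (k / 2 * (σ - τ)) :=
        intervalIntegral.integral_const_mul _ _
    _ ≤ a ^ (-N) * M * (k / 2)⁻¹ := by
        gcongr
        exact intervalIntegral_exp_mul_sub_le_inv (by positivity) 1 τ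
    _ = a ^ (-N) * M * (2 / k) := by rw [inv_div]

/-- The discrete-mode parametrix built from the Green's function `(2k)⁻¹ e^{-k|τ-σ|}`
of `∂_τ² - k²` maps `σ^{-N}`-decaying data to `τ^{-N}`-decaying output. -/
theorem discrete_mode_parametrix_bound (k N : ℝ) (hk : 0 < k) (hN : 0 ≤ N) :
    ∃ C : ℝ, 0 < C ∧ ∀ y : ℝ → ℝ, ContinuousOn y (Set.Ici 1) →
      ∀ M : ℝ, (∀ σ : ℝ, 1 ≤ σ → σ ^ N * |y σ| ≤ M) →
        (∀ τ : ℝ, 1 ≤ τ →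
          IntegrableOn (fun σ => (2 * k)⁻¹ * Real.exp (-k * (σ - τ)) * y σ)
            (Set.Ici τ)) ∧
        (∀ τ : ℝ, 1 ≤ τ →
          τ ^ N *
              |(∫ σ in Set.Ici τ, (2 * k)⁻¹ * Real.exp (-k * (σ - τ)) * y σ)
                + ∫ σ in (1 : ℝ)..τ, (2 * k)⁻¹ * Real.exp (-k * (τ - σ)) * y σ|
            ≤ C * M) := by
  obtain ⟨a, ha0, ha1, haN⟩ := exists_pos_le_one_mul_le hN (half_pos hk)
  refine ⟨(2 * k)⁻¹ * (k⁻¹ + a ^ (-N) * (2 / k)), by positivity, fun y hy M hM => ⟨?_, ?_⟩⟩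
  · intro τ hτ
    simp_rw [mul_assoc]
    exact (integrableOn_exp_neg_mul_sub_mul_Ici hk
      (hy.mono (Ici_subset_Ici.2 hτ)) fun σ hσ => abs_le_div_rpow_of_rpow_mul_abs_le hN
        (by linarith) hσ (hM σ (hτ.trans hσ))).const_mul (2 * k)⁻¹
  · intro τ hτ
    have htail := rpow_mul_abs_integral_exp_neg_mul_sub_mul_Ici_le (y := y) hk hN
      (by linarith) fun σ hσ => hM σ (hτ.trans hσ)
    have hnear := rpow_mul_abs_intervalIntegral_exp_neg_mul_sub_mul_le (y := y) hk hN ha0 ha1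
      haN hτ fun σ hσ => hM σ hσ.1
    simp_rw [mul_assoc (2 * k)⁻¹, integral_const_mul, intervalIntegral.integral_const_mul,
      ← mul_add, abs_mul, abs_of_pos (by positivity : (0 : ℝ) < (2 * k)⁻¹)]
    calc τ ^ N * ((2 * k)⁻¹ * |(∫ σ in Ici τ, exp (-k * (σ - τ)) * y σ)
          + ∫ σ in (1 : ℝ)..τ, exp (-k * (τ - σ)) * y σ|)
        ≤ (2 * k)⁻¹ * (τ ^ N * |∫ σ in Ici τ, exp (-k * (σ - τ)) * y σ|
          + τ ^ N * |∫ σ in (1 : ℝ)..τ, exp (-k * (τ - σ)) * y σ|) := by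
          rw [mul_left_comm, ← mul_add]
          gcongr
          exact abs_add_le _ _
      _ ≤ (2 * k)⁻¹ * (M / k + a ^ (-N) * M * (2 / k)) := by gcongr
      _ = (2 * k)⁻¹ * ((k⁻¹ + a ^ (-N) * (2 / k)) * M) := by ring
end

section
/- There exists an absolute constant C > 0 such that for all complex numbers z, w with Re z > −1/2, Re w > −1/2 and |w| ≤ |z|, one has | z^{1/2}·(1−z)·(1−6w+w²) − w^{1/2}·(1−w)·(1−6z+z²) | ≤ C·|z|^{1/2}·|1+z|^{3/2}·|1+w|^{3/2}, where the square roots are taken with respect to the principal branch of the complex power. -/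
/-!
On the half-plane `Re u > -1/2` one has `|1 + u| ≥ 1/2`, so `|u| ≤ 3|1 + u|` and each factor
`1 - u`, `1 - 6u + u²` is bounded by a multiple of `|1 + u|`, `|1 + u|²`. Estimating the two
terms of the difference separately, it remains to compare `|1 + w|` with `|1 + z|` and
`|w| |1 + z|` with `|z| |1 + w|`; both ratios are bounded once `|w| ≤ |z|`.
-/

open Complex

lemma half_le_norm_one_add {z : ℂ} (hz : -(1 / 2 : ℝ) < z.re) : 1 / 2 ≤ ‖1 + z‖ :=
  calc (1 / 2 : ℝ) ≤ (1 + z).re := by simp only [add_re, one_re]; linarith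
    _ ≤ ‖1 + z‖ := re_le_norm _

lemma norm_le_norm_one_add_add_one (z : ℂ) : ‖z‖ ≤ ‖1 + z‖ + 1 :=
  calc ‖z‖ = ‖(1 + z) - 1‖ := by rw [add_sub_cancel_left]
    _ ≤ ‖1 + z‖ + 1 := by simpa using norm_sub_le (1 + z) 1

section FactorBounds

variable {z w : ℂ}

lemma norm_one_sub_le (hz : 1 / 2 ≤ ‖1 + z‖) : ‖1 - z‖ ≤ 5 * ‖1 + z‖ :=
  calc ‖1 - z‖ = ‖2 - (1 + z)‖ := by ring_nf
    _ ≤ 2 + ‖1 + z‖ := by simpa using norm_sub_le (2 : ℂ) (1 + z)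
    _ ≤ 5 * ‖1 + z‖ := by linarith

lemma norm_one_sub_six_mul_add_sq_le (hz : 1 / 2 ≤ ‖1 + z‖) :
    ‖1 - 6 * z + z ^ 2‖ ≤ 49 * ‖1 + z‖ ^ 2 :=
  calc ‖1 - 6 * z + z ^ 2‖ = ‖(1 + z) ^ 2 - 8 * z‖ := by ring_nf
    _ ≤ ‖(1 + z) ^ 2‖ + ‖8 * z‖ := norm_sub_le _ _
    _ = ‖1 + z‖ ^ 2 + 8 * ‖z‖ := by rw [norm_pow, norm_mul, RCLike.norm_ofNat]
    _ ≤ 49 * ‖1 + z‖ ^ 2 := by nlinarith [norm_le_norm_one_add_add_one z]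

lemma norm_one_add_le_of_norm_le (hwz : ‖w‖ ≤ ‖z‖) (hz : 1 / 2 ≤ ‖1 + z‖) :
    ‖1 + w‖ ≤ 5 * ‖1 + z‖ := by
  have h1 := norm_add_le (1 : ℂ) w
  have h2 := norm_le_norm_one_add_add_one z
  rw [norm_one] at h1
  linarith

lemma norm_mul_norm_one_add_le (hwz : ‖w‖ ≤ ‖z‖) (hw : 1 / 2 ≤ ‖1 + w‖) :
    ‖w‖ * ‖1 + z‖ ≤ 5 * (‖z‖ * ‖1 + w‖) := by
  -- `‖w‖ ≤ ‖z‖ ≤ 2 ‖z‖ ‖1 + w‖` and `‖w‖ ‖z‖ ≤ 3 ‖1 + w‖ ‖z‖`, as `‖w‖ ≤ ‖1 + w‖ + 1 ≤ 3 ‖1 + w‖`.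
  have h1 := norm_add_le (1 : ℂ) z
  have h2 := norm_le_norm_one_add_add_one w
  rw [norm_one] at h1
  nlinarith [norm_nonneg w, norm_nonneg z]

end FactorBounds

lemma norm_cpow_one_half (z : ℂ) : ‖z ^ ((1 : ℂ) / 2)‖ = √‖z‖ := by
  rw [Real.sqrt_eq_rpow, ← norm_cpow_real]; norm_num

lemma rpow_three_halves {x : ℝ} (hx : 0 ≤ x) : x ^ ((3 : ℝ) / 2) = x * √x := by
  rw [Real.sqrt_eq_rpow, ← Real.rpow_one_add' hx (by norm_num)]; norm_num

lemma sqrt_mul_mul_sq_add_le {κ a b A B : ℝ} (hκ : 0 ≤ κ) (ha : 0 ≤ a) (hA : 0 ≤ A) (hB : 0 ≤ B)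
    (hBA : B ≤ κ ^ 2 * A) (hbA : b * A ≤ κ ^ 2 * (a * B)) :
    √a * A * B ^ 2 + √b * B * A ^ 2 ≤ 2 * κ * (√a * (A * √A) * (B * √B)) := by
  have hsr : √B ≤ κ * √A := by
    rw [← Real.sqrt_sq hκ, ← Real.sqrt_mul (sq_nonneg κ)]
    exact Real.sqrt_le_sqrt hBA
  have hqr : √b * √A ≤ κ * (√a * √B) := by
    rw [← Real.sqrt_sq hκ, ← Real.sqrt_mul ha, ← Real.sqrt_mul (sq_nonneg κ),
      ← Real.sqrt_mul' _ hA]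
    exact Real.sqrt_le_sqrt hbA
  obtain ⟨r, hr, rfl⟩ : ∃ r, 0 ≤ r ∧ r ^ 2 = A := ⟨√A, Real.sqrt_nonneg A, Real.sq_sqrt hA⟩
  obtain ⟨s, hs, rfl⟩ : ∃ s, 0 ≤ s ∧ s ^ 2 = B := ⟨√B, Real.sqrt_nonneg B, Real.sq_sqrt hB⟩
  rw [Real.sqrt_sq hr, Real.sqrt_sq hs] at *
  -- the gap is `√a r² s³ (κ r - s) + r³ s² (κ √a s - √b r)`
  nlinarith [mul_le_mul_of_nonneg_left hsr (by positivity : 0 ≤ √a * r ^ 2 * s ^ 3),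
    mul_le_mul_of_nonneg_left hqr (by positivity : 0 ≤ r ^ 3 * s ^ 2)]

/-- The key kernel estimate on the half-plane `Re z > -1/2`: there is an absolute
constant `C > 0` with
`|z^{1/2}(1-z)(1-6w+w²) - w^{1/2}(1-w)(1-6z+z²)| ≤ C |z|^{1/2} |1+z|^{3/2} |1+w|^{3/2}`
whenever `Re z, Re w > -1/2` and `|w| ≤ |z|` (principal branch square roots). -/
theorem kernel_estimate_half_plane :
    ∃ C : ℝ, 0 < C ∧ ∀ z w : ℂ, -(1 / 2 : ℝ) < z.re → -(1 / 2 : ℝ) < w.re →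
      ‖w‖ ≤ ‖z‖ →
      ‖z ^ ((1 : ℂ) / 2) * (1 - z) * (1 - 6 * w + w ^ 2)
          - w ^ ((1 : ℂ) / 2) * (1 - w) * (1 - 6 * z + z ^ 2)‖
        ≤ C * ‖z‖ ^ ((1 : ℝ) / 2) * ‖1 + z‖ ^ ((3 : ℝ) / 2) *
            ‖1 + w‖ ^ ((3 : ℝ) / 2) := by
  refine ⟨1470, by norm_num, fun z w hz hw hwz => ?_⟩
  have hz' := half_le_norm_one_add hz
  have hw' := half_le_norm_one_add hw
  have hBA : ‖1 + w‖ ≤ 3 ^ 2 * ‖1 + z‖ := by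
    linarith [norm_one_add_le_of_norm_le hwz hz', norm_nonneg (1 + z)]
  have hbA : ‖w‖ * ‖1 + z‖ ≤ 3 ^ 2 * (‖z‖ * ‖1 + w‖) := by
    nlinarith [norm_mul_norm_one_add_le hwz hw', norm_nonneg z, norm_nonneg (1 + w)]
  rw [rpow_three_halves (norm_nonneg _), rpow_three_halves (norm_nonneg _),
    ← Real.sqrt_eq_rpow]
  calc _ ≤ ‖z ^ ((1 : ℂ) / 2) * (1 - z) * (1 - 6 * w + w ^ 2)‖
        + ‖w ^ ((1 : ℂ) / 2) * (1 - w) * (1 - 6 * z + z ^ 2)‖ := norm_sub_le _ _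
    _ ≤ √‖z‖ * (5 * ‖1 + z‖) * (49 * ‖1 + w‖ ^ 2)
        + √‖w‖ * (5 * ‖1 + w‖) * (49 * ‖1 + z‖ ^ 2) := by
      simp only [norm_mul, norm_cpow_one_half]
      gcongr
      exacts [norm_one_sub_le hz', norm_one_sub_six_mul_add_sq_le hw',
        norm_one_sub_le hw', norm_one_sub_six_mul_add_sq_le hz']
    _ = 245 * (√‖z‖ * ‖1 + z‖ * ‖1 + w‖ ^ 2 + √‖w‖ * ‖1 + w‖ * ‖1 + z‖ ^ 2) := by ring
    _ ≤ 245 * (2 * 3 * (√‖z‖ * (‖1 + z‖ * √‖1 + z‖) * (‖1 + w‖ * √‖1 + w‖))) := by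
      gcongr
      exact sqrt_mul_mul_sq_add_le (by norm_num) (norm_nonneg _) (norm_nonneg _)
        (norm_nonneg _) hBA hbA
    _ = _ := by ring
end
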